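/- arXiv:1906.03242 — 2 statements merged into one kernel-verified Lean document; each statement's English description precedes it below -/
import Mathlib

section
/- For every positive integer j, the sum of A(i) for i from 1 to j is at most (j/2)·(3 + ⌊log₂ j⌋). -/
/-- A006519: largest power of 2 dividing `j`. -/
def A (j : ℕ) : ℕ := 2 ^ (j.factorization 2)

/-!
Halving `j` gives the recursion `S j = ⌈j/2⌉ + 2 S ⌊j/2⌋` for `S j = ∑_{i ≤ j} A i`: odd `i`
contribute `1` each and `A (2m) = 2 A m`. Since `⌊log₂ ⌊j/2⌋⌋ = ⌊log₂ j⌋ - 1`, the bound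
`2 S j ≤ j (3 + ⌊log₂ j⌋)` then follows by strong induction.
-/

open Finset

lemma A_two_mul {m : ℕ} (hm : m ≠ 0) : A (2 * m) = 2 * A m := by
  simp only [A, Nat.factorization_mul two_ne_zero hm, Finsupp.add_apply,
    Nat.prime_two.factorization_self, pow_add, pow_one]

lemma A_of_odd {i : ℕ} (hi : Odd i) : A i = 1 := by
  rw [A, Nat.factorization_eq_zero_of_not_dvd hi.not_two_dvd_nat, pow_zero]

lemma sum_Icc_A_eq (j : ℕ) :
    ∑ i ∈ Icc 1 j, A i = (j + 1) / 2 + 2 * ∑ i ∈ Icc 1 (j / 2), A i := by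
  induction j with
  | zero => simp
  | succ j ih =>
    rw [sum_Icc_succ_top (by omega), ih]
    rcases Nat.even_or_odd j with ⟨m, rfl⟩ | ⟨m, rfl⟩
    · rw [A_of_odd ⟨m, by ring⟩, show (m + m + 1) / 2 = (m + m) / 2 by omega]
      omega
    · rw [show (2 * m + 1 + 1) / 2 = m + 1 by omega, show (2 * m + 1) / 2 = m by omega,
        sum_Icc_succ_top (by omega), show 2 * m + 1 + 1 = 2 * (m + 1) by ring,
        A_two_mul (by omega)]
      omega

lemma two_mul_sum_Icc_A_le (j : ℕ) : 2 * ∑ i ∈ Icc 1 j, A i ≤ j * (3 + Nat.log 2 j) := by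
  induction j using Nat.strong_induction_on with
  | _ j ih =>
    rcases Nat.lt_or_ge j 2 with hj | hj
    · interval_cases j <;> simp [A]
    · have hhalf := ih (j / 2) (by omega)
      have hlog : 1 ≤ Nat.log 2 j := Nat.le_log_of_pow_le one_lt_two (by omega)
      rw [Nat.log_div_base] at hhalf
      set L := Nat.log 2 j
      have hstep : 2 * ((j + 1) / 2) + 2 * (j / 2 * (3 + (L - 1))) ≤ j * (3 + L) := by
        rw [show 3 + (L - 1) = 2 + L by omega]
        rcases Nat.even_or_odd' j with ⟨n, rfl | rfl⟩
        · rw [show (2 * n + 1) / 2 = n by omega, show 2 * n / 2 = n by omega]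
          nlinarith
        · rw [show (2 * n + 1 + 1) / 2 = n + 1 by omega, show (2 * n + 1) / 2 = n by omega]
          nlinarith
      rw [sum_Icc_A_eq]
      omega

theorem stmt_2_general (j : ℕ) :
    (∑ i ∈ Finset.Icc 1 j, (A i : ℝ)) ≤ (j / 2) * (3 + Nat.log 2 j) := by
  have h : ((2 * ∑ i ∈ Icc 1 j, A i : ℕ) : ℝ) ≤ (j * (3 + Nat.log 2 j) : ℕ) := by
    exact_mod_cast two_mul_sum_Icc_A_le j
  push_cast at h
  linarith

theorem stmt_2 (j : ℕ) (hj : 0 < j) :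
    (∑ i ∈ Finset.Icc 1 j, (A i : ℝ)) ≤ (j / 2) * (3 + Nat.log 2 j) :=
  stmt_2_general j
end

section
/- The sum of A(i) for i from 1 to j equals the sum over k from 0 to ⌊log₂ j⌋ of ⌊(j/2^k + 1)/2⌋ · 2^k, for every positive integer j. -/
lemma fiber_card (j k : ℕ) :
    ((Finset.Icc 1 j).filter (fun i => i.factorization 2 = k)).card
      = (j / 2 ^ k + 1) / 2 := by
  have hIcc : Finset.Icc 1 j = Finset.Ioc 0 j := by
    ext x; simp [Nat.lt_iff_add_one_le]
  have key : ∀ i ∈ Finset.Icc 1 j,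
      (i.factorization 2 = k ↔ (2 ^ k ∣ i ∧ ¬ 2 ^ (k + 1) ∣ i)) := by
    intro i hi
    simp only [Finset.mem_Icc] at hi
    have hi0 : i ≠ 0 := by omega
    rw [Nat.Prime.pow_dvd_iff_le_factorization Nat.prime_two hi0,
        Nat.Prime.pow_dvd_iff_le_factorization Nat.prime_two hi0]
    omega
  rw [Finset.filter_congr key]
  have hsplit := Finset.card_filter_add_card_filter_not
    (s := (Finset.Icc 1 j).filter (fun i => 2 ^ k ∣ i))
    (p := fun i => 2 ^ (k + 1) ∣ i)
  rw [Finset.filter_filter, Finset.filter_filter] at hsplit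
  have h1 : ((Finset.Icc 1 j).filter (fun i => 2 ^ k ∣ i ∧ 2 ^ (k + 1) ∣ i))
      = (Finset.Icc 1 j).filter (fun i => 2 ^ (k + 1) ∣ i) := by
    apply Finset.filter_congr
    intro i _
    constructor
    · exact fun h => h.2
    · exact fun h => ⟨dvd_trans (pow_dvd_pow 2 (Nat.le_succ k)) h, h⟩
  rw [h1] at hsplit
  have h2 : ((Finset.Icc 1 j).filter (fun i => 2 ^ k ∣ i)).card = j / 2 ^ k := by
    rw [hIcc]; exact Nat.Ioc_filter_dvd_card_eq_div j (2 ^ k)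
  have h3 : ((Finset.Icc 1 j).filter (fun i => 2 ^ (k + 1) ∣ i)).card = j / 2 ^ (k + 1) := by
    rw [hIcc]; exact Nat.Ioc_filter_dvd_card_eq_div j (2 ^ (k + 1))
  have h4 : j / 2 ^ (k + 1) = (j / 2 ^ k) / 2 := by
    rw [pow_succ, Nat.div_div_eq_div_mul]
  rw [h2, h3, h4] at hsplit
  omega

theorem stmt_5 (j : ℕ) (hj : 0 < j) :
    (∑ i ∈ Finset.Icc 1 j, A i)
      = ∑ k ∈ Finset.range (Nat.log 2 j + 1), ((j / 2 ^ k + 1) / 2) * 2 ^ k := by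
  have hmaps : ∀ i ∈ Finset.Icc 1 j, i.factorization 2 ∈ Finset.range (Nat.log 2 j + 1) := by
    intro i hi
    simp only [Finset.mem_Icc] at hi
    have hi0 : i ≠ 0 := by omega
    have h1 : 2 ^ (i.factorization 2) ≤ i :=
      Nat.le_of_dvd (by omega) (Nat.ordProj_dvd i 2)
    have h2 : 2 ^ (i.factorization 2) ≤ j := le_trans h1 hi.2
    rw [Finset.mem_range, Nat.lt_succ_iff]
    exact (Nat.le_log_iff_pow_le one_lt_two (by omega)).mpr h2
  rw [← Finset.sum_fiberwise_of_maps_to hmaps A]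
  apply Finset.sum_congr rfl
  intro k hk
  rw [← fiber_card j k, Finset.card_eq_sum_ones, Finset.sum_mul, one_mul]
  apply Finset.sum_congr rfl
  intro i hi
  simp only [Finset.mem_filter] at hi
  simp [A, hi.2]
end
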